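/- Given a Szegő system, fix n ∈ ℕ and let Z = (Z_1,…,Z_d) be a d-tuple of m×m complex matrices that is a strict row contraction, i.e. I_m − (Z_1 Z_1^* + ⋯ + Z_d Z_d^*) is positive definite. Then φ^#_{σ(n)}(Z^*)^* φ^#_{σ(n)}(Z^*) is positive definite, where Z^* := (Z_1^*,…,Z_d^*); in particular det φ^#_{σ(n)}(Z^*) ≠ 0. Hence every determinantal zero of the matrix-evaluation Z ↦ φ^#_{σ(n)}(Z^*) lies outside the row-ball. -/

import Mathlib

open scoped BigOperators ComplexOrder

/-- The shortlex (length-then-lexicographic) order on words in `F_d^+`. -/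
def ShortlexLE {d : ℕ} (σ τ : List (Fin d)) : Prop :=
  σ.length < τ.length ∨ (σ.length = τ.length ∧ (σ = τ ∨ List.Lex (· < ·) σ τ))

/-- The defect `d_σ := √(1 - |γ_σ|²)`. -/
noncomputable def defect {d : ℕ} (γ : List (Fin d) → ℂ) (σ : List (Fin d)) : ℝ :=
  Real.sqrt (1 - ‖γ σ‖ ^ 2)

/-- A Szegő system: Verblunsky coefficients `γ : F_d^+ → ℂ` with `γ_∅ = 0`, `|γ_σ| < 1`,
together with families of noncommutative polynomials `φ, φr (= φ^#)` with `φ_∅ = φ^#_∅ = 1`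
satisfying the Szegő recurrences, where `e : ℕ ≃ F_d^+` is the shortlex order isomorphism and
`τ - 1 := e (e⁻¹ τ - 1)` is the immediate shortlex predecessor. -/
structure SzegoSystem (d : ℕ) where
  /-- the shortlex enumeration of `F_d^+` -/
  e : ℕ ≃ List (Fin d)
  /-- `e` is an order isomorphism onto the shortlex order -/
  he : ∀ m n : ℕ, m ≤ n ↔ ShortlexLE (e m) (e n)
  /-- the Verblunsky coefficients -/
  γ : List (Fin d) → ℂ
  hγ0 : γ [] = 0
  hγlt : ∀ σ : List (Fin d), ‖γ σ‖ < 1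
  /-- the orthonormal polynomials -/
  φ : List (Fin d) → FreeAlgebra ℂ (Fin d)
  /-- the reverse polynomials `φ^#` -/
  φr : List (Fin d) → FreeAlgebra ℂ (Fin d)
  hφ0 : φ [] = 1
  hφr0 : φr [] = 1
  recφ : ∀ (k : Fin d) (σ : List (Fin d)),
    φ (k :: σ) = (((defect γ (k :: σ) : ℝ) : ℂ))⁻¹ •
      (FreeAlgebra.ι ℂ k * φ σ - γ (k :: σ) • φr (e (e.symm (k :: σ) - 1)))
  recφr : ∀ (k : Fin d) (σ : List (Fin d)),
    φr (k :: σ) = (((defect γ (k :: σ) : ℝ) : ℂ))⁻¹ •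
      ((-(starRingEnd ℂ (γ (k :: σ)))) • (FreeAlgebra.ι ℂ k * φ σ) +
        φr (e (e.symm (k :: σ) - 1)))

/-- Evaluation of a noncommutative polynomial at a `d`-tuple of `m×m` matrices. -/
noncomputable def evalM {d m : ℕ} (A : Fin d → Matrix (Fin m) (Fin m) ℂ) :
    FreeAlgebra ℂ (Fin d) →ₐ[ℂ] Matrix (Fin m) (Fin m) ℂ :=
  FreeAlgebra.lift ℂ A

/-- The shortlex-largest word of length `n`: the largest generator repeated `n` times. -/
def sigmaWord (d : ℕ) (hd : 1 ≤ d) (n : ℕ) : List (Fin d) :=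
  List.replicate n (⟨d - 1, by omega⟩ : Fin d)

/-!
For `τ = k :: σ` the Szegő recurrence acts on the pair `(Z_k φ_σ, φ^#_{τ-1})` by a `J`-unitary
matrix, so at any tuple `A` in a `*`-algebra
`φ^#_τ(A)^* φ^#_τ(A) - φ^#_{τ-1}(A)^* φ^#_{τ-1}(A) = φ_τ(A)^* φ_τ(A) - (A_k φ_σ(A))^* (A_k φ_σ(A))`.
Telescoping along the shortlex enumeration and regrouping the subtracted terms by their suffix `σ`
gives a Christoffel–Darboux formula: `φ^#_{e N}(A)^* φ^#_{e N}(A)` is the sum over `j ≤ N` of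
`φ_{e j}(A)^* φ_{e j}(A) - ∑ (A_k φ_{e j}(A))^* (A_k φ_{e j}(A))`, the inner sum running over the
letters `k` with `k :: e j ≤ e N`. At `A = Z^*` the `j`-th summand is
`φ_{e j}(Z^*)^* (I - ∑ Z_k Z_k^*) φ_{e j}(Z^*)`, which is positive semidefinite for a strict row
contraction, and the summand `j = 0` is `I - ∑ Z_k Z_k^*` itself, which is positive definite.
-/

theorem star_smul_mul_self_rotation {R : Type*} [Ring R] [StarRing R] [Algebra ℂ R]
    [StarModule ℂ R] (X Y : R) (γ : ℂ) (δ : ℝ) (hδ : δ ^ 2 = 1 - ‖γ‖ ^ 2) (hδ0 : δ ≠ 0) :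
    star ((δ : ℂ)⁻¹ • (-(starRingEnd ℂ γ) • X + Y)) * ((δ : ℂ)⁻¹ • (-(starRingEnd ℂ γ) • X + Y)) =
      star ((δ : ℂ)⁻¹ • (X - γ • Y)) * ((δ : ℂ)⁻¹ • (X - γ • Y)) + star Y * Y - star X * X := by
  have hδγ : (δ : ℂ) ^ 2 = 1 - γ * star γ := by
    rw [← starRingEnd_apply, Complex.mul_conj, Complex.normSq_eq_norm_sq]
    exact_mod_cast hδ
  have hδc : (δ : ℂ) ≠ 0 := Complex.ofReal_ne_zero.mpr hδ0
  have hδstar : star ((δ : ℂ)⁻¹) = (δ : ℂ)⁻¹ := by simp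
  simp only [star_smul, hδstar, star_add, star_sub, star_neg, starRingEnd_apply, star_star]
  simp only [smul_add, smul_sub, smul_mul_assoc, mul_smul_comm, add_mul, sub_mul, mul_add,
    mul_sub, neg_smul, smul_neg, neg_mul, mul_neg, smul_smul]
  match_scalars <;> field_simp <;> rw [hδγ] <;> ring

theorem Matrix.PosDef.sub_sum_of_subset {n ι R : Type*} [DecidableEq ι] [Ring R]
    [PartialOrder R] [StarRing R] [AddLeftMono R] {M : Matrix n n R} {f : ι → Matrix n n R}
    {s t : Finset ι} (hst : s ⊆ t)
    (hf : ∀ i ∈ t \ s, (f i).PosSemidef) (hM : (M - ∑ i ∈ t, f i).PosDef) :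
    (M - ∑ i ∈ s, f i).PosDef := by
  rw [← Finset.sum_sdiff hst] at hM
  have h : M - ∑ i ∈ s, f i = (M - (∑ i ∈ t \ s, f i + ∑ i ∈ s, f i)) + ∑ i ∈ t \ s, f i := by
    abel
  rw [h]
  exact hM.add_posSemidef (Matrix.posSemidef_sum _ hf)

theorem star_mul_self_sub_sum_eq {R ι : Type*} [Ring R] [StarRing R] (x : R) (z : ι → R)
    (s : Finset ι) :
    star x * x - ∑ i ∈ s, star (star (z i) * x) * (star (z i) * x) =
      star x * (1 - ∑ i ∈ s, z i * star (z i)) * x := by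
  simp only [star_mul, star_star, mul_sub, sub_mul, mul_one, Finset.mul_sum, Finset.sum_mul,
    mul_assoc]

theorem Matrix.det_ne_zero_of_posDef_star_mul_self {n : Type*} [Fintype n] [DecidableEq n]
    {P : Matrix n n ℂ} (h : (star P * P).PosDef) : P.det ≠ 0 := by
  have hpos := h.det_pos
  rw [Matrix.star_eq_conjTranspose, Matrix.det_mul, Matrix.det_conjTranspose] at hpos
  exact right_ne_zero_of_mul hpos.ne'

theorem defect_sq {d : ℕ} {γ : List (Fin d) → ℂ} {σ : List (Fin d)} (h : ‖γ σ‖ < 1) :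
    defect γ σ ^ 2 = 1 - ‖γ σ‖ ^ 2 :=
  Real.sq_sqrt (by nlinarith [norm_nonneg (γ σ)])

theorem defect_pos {d : ℕ} {γ : List (Fin d) → ℂ} {σ : List (Fin d)} (h : ‖γ σ‖ < 1) :
    0 < defect γ σ :=
  Real.sqrt_pos.mpr (by nlinarith [norm_nonneg (γ σ)])

namespace SzegoSystem

variable {d : ℕ} (S : SzegoSystem d)

theorem e_zero : S.e 0 = [] := by
  rcases (S.he 0 (S.e.symm [])).mp (Nat.zero_le _) with h | ⟨h, -⟩
  · simp at h
  · simpa using h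

theorem symm_lt_symm_cons (k : Fin d) (σ : List (Fin d)) : S.e.symm σ < S.e.symm (k :: σ) := by
  refine lt_of_le_of_ne ?_ fun h => List.cons_ne_self k σ (S.e.symm.injective h).symm
  rw [S.he, Equiv.apply_symm_apply, Equiv.apply_symm_apply]
  exact Or.inl (by simp)

theorem exists_e_succ_eq_cons (N : ℕ) : ∃ k σ, S.e (N + 1) = k :: σ := by
  match h : S.e (N + 1) with
  | [] => exact absurd (S.e.injective (h.trans S.e_zero.symm)) N.succ_ne_zero
  | k :: σ => exact ⟨k, σ, rfl⟩

def extensionLetters (N : ℕ) (σ : List (Fin d)) : Finset (Fin d) :=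
  Finset.univ.filter fun k => S.e.symm (k :: σ) ≤ N

theorem extensionLetters_self (N : ℕ) : S.extensionLetters N (S.e N) = ∅ := by
  refine Finset.filter_false_of_mem fun k _ => ?_
  have := S.symm_lt_symm_cons k (S.e N)
  rw [Equiv.symm_apply_apply] at this
  omega

theorem sum_extensionLetters_succ {M : Type*} [AddCommMonoid M] {N : ℕ} {k₀ : Fin d}
    {σ₀ : List (Fin d)} (h : S.e (N + 1) = k₀ :: σ₀) (g : Fin d → M) (σ : List (Fin d)) :
    ∑ k ∈ S.extensionLetters (N + 1) σ, g k =
      ∑ k ∈ S.extensionLetters N σ, g k + if σ = σ₀ then g k₀ else 0 := by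
  have hmem : ∀ k, k ∈ S.extensionLetters (N + 1) σ ↔
      k ∈ S.extensionLetters N σ ∨ (k = k₀ ∧ σ = σ₀) := fun k => by
    simp [extensionLetters, Nat.le_succ_iff, Equiv.symm_apply_eq, h]
  split_ifs with hσ
  · subst hσ
    have hnew : k₀ ∉ S.extensionLetters N σ := by
      simp [extensionLetters, ← h]
    rw [show S.extensionLetters (N + 1) σ = insert k₀ (S.extensionLetters N σ) by
      ext k; simp [hmem, or_comm], Finset.sum_insert hnew, add_comm]
  · rw [add_zero, show S.extensionLetters (N + 1) σ = S.extensionLetters N σ by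
      ext k; simp [hmem, hσ]]

theorem sum_range_ite_e_eq {M : Type*} [AddCommMonoid M] (f : List (Fin d) → M) {N : ℕ}
    {σ : List (Fin d)} (h : S.e.symm σ ≤ N) :
    ∑ j ∈ Finset.range (N + 1), (if S.e j = σ then f (S.e j) else 0) = f σ := by
  simp_rw [← Equiv.eq_symm_apply]
  rw [Finset.sum_ite_eq']
  simp [Nat.lt_succ_of_le h]

variable {R : Type*} [Ring R] [StarRing R] [Algebra ℂ R] [StarModule ℂ R] (A : Fin d → R)

theorem star_lift_φr_mul_self_succ {N : ℕ} {k : Fin d} {σ : List (Fin d)}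
    (h : S.e (N + 1) = k :: σ) :
    star (FreeAlgebra.lift ℂ A (S.φr (S.e (N + 1)))) *
        FreeAlgebra.lift ℂ A (S.φr (S.e (N + 1))) =
      star (FreeAlgebra.lift ℂ A (S.φ (S.e (N + 1)))) * FreeAlgebra.lift ℂ A (S.φ (S.e (N + 1))) +
        star (FreeAlgebra.lift ℂ A (S.φr (S.e N))) * FreeAlgebra.lift ℂ A (S.φr (S.e N)) -
        star (A k * FreeAlgebra.lift ℂ A (S.φ σ)) * (A k * FreeAlgebra.lift ℂ A (S.φ σ)) := by
  have hpred : S.e (S.e.symm (k :: σ) - 1) = S.e N := by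
    rw [← h, Equiv.symm_apply_apply, Nat.add_sub_cancel]
  rw [h, S.recφr, S.recφ, hpred]
  simp only [map_smul, map_add, map_sub, map_mul, FreeAlgebra.lift_ι_apply]
  exact star_smul_mul_self_rotation _ _ _ _ (defect_sq (S.hγlt _)) (defect_pos (S.hγlt _)).ne'

theorem star_lift_φr_mul_self_eq_sum (N : ℕ) :
    star (FreeAlgebra.lift ℂ A (S.φr (S.e N))) * FreeAlgebra.lift ℂ A (S.φr (S.e N)) =
      ∑ j ∈ Finset.range (N + 1),
        (star (FreeAlgebra.lift ℂ A (S.φ (S.e j))) * FreeAlgebra.lift ℂ A (S.φ (S.e j)) -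
          ∑ k ∈ S.extensionLetters N (S.e j),
            star (A k * FreeAlgebra.lift ℂ A (S.φ (S.e j))) *
              (A k * FreeAlgebra.lift ℂ A (S.φ (S.e j)))) := by
  induction N with
  | zero =>
    rw [Finset.sum_range_one, S.extensionLetters_self]
    simp [S.e_zero, S.hφ0, S.hφr0]
  | succ N ih =>
    obtain ⟨k₀, σ₀, h⟩ := S.exists_e_succ_eq_cons N
    have hσ₀ : S.e.symm σ₀ ≤ N := by
      have := S.symm_lt_symm_cons k₀ σ₀
      rw [← h, Equiv.symm_apply_apply] at this
      omega
    rw [S.star_lift_φr_mul_self_succ A h, ih, Finset.sum_range_succ _ (N + 1),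
      S.extensionLetters_self, Finset.sum_empty, sub_zero]
    simp_rw [S.sum_extensionLetters_succ h, ← sub_sub, Finset.sum_sub_distrib]
    rw [S.sum_range_ite_e_eq (fun σ => star (A k₀ * FreeAlgebra.lift ℂ A (S.φ σ)) *
      (A k₀ * FreeAlgebra.lift ℂ A (S.φ σ))) hσ₀]
    abel

end SzegoSystem

theorem reverse_poly_no_zeros_in_ball_general {d m : ℕ} (hd : 1 ≤ d) (S : SzegoSystem d)
    (n : ℕ) (Z : Fin d → Matrix (Fin m) (Fin m) ℂ)
    (hZ : ((1 : Matrix (Fin m) (Fin m) ℂ) - ∑ k : Fin d, Z k * star (Z k)).PosDef) :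
    (star (evalM (fun j => star (Z j)) (S.φr (sigmaWord d hd n))) *
        evalM (fun j => star (Z j)) (S.φr (sigmaWord d hd n))).PosDef ∧
      (evalM (fun j => star (Z j)) (S.φr (sigmaWord d hd n))).det ≠ 0 := by
  have hdefect (s : Finset (Fin d)) : (1 - ∑ k ∈ s, Z k * star (Z k)).PosDef :=
    hZ.sub_sum_of_subset s.subset_univ fun k _ => by
      rw [Matrix.star_eq_conjTranspose]; exact Matrix.posSemidef_self_mul_conjTranspose (Z k)
  set P := evalM (fun j => star (Z j)) (S.φr (sigmaWord d hd n)) with hP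
  have hPD : (star P * P).PosDef := by
    obtain ⟨N, hN⟩ := S.e.surjective (sigmaWord d hd n)
    rw [hP, ← hN, evalM, S.star_lift_φr_mul_self_eq_sum, Finset.sum_range_succ']
    simp_rw [star_mul_self_sub_sum_eq]
    refine Matrix.PosDef.posSemidef_add (Matrix.posSemidef_sum _ fun j _ => ?_) ?_
    · rw [Matrix.star_eq_conjTranspose]
      exact (hdefect _).posSemidef.conjTranspose_mul_mul_same _
    · simpa [S.e_zero, S.hφ0] using hdefect _
  exact ⟨hPD, Matrix.det_ne_zero_of_posDef_star_mul_self hPD⟩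

/-- if `Z` is a strict row contraction (`I − ∑_k Z_k Z_k^*` positive definite),
then `φ^#_{σ(n)}(Z^*)^* φ^#_{σ(n)}(Z^*)` is positive definite and `det φ^#_{σ(n)}(Z^*) ≠ 0`;
hence every determinantal zero of `Z ↦ φ^#_{σ(n)}(Z^*)` lies outside the row-ball. -/
theorem reverse_poly_no_zeros_in_ball {d m : ℕ} (hd : 1 ≤ d) (hm : 1 ≤ m) (S : SzegoSystem d)
    (n : ℕ) (Z : Fin d → Matrix (Fin m) (Fin m) ℂ)
    (hZ : ((1 : Matrix (Fin m) (Fin m) ℂ) - ∑ k : Fin d, Z k * star (Z k)).PosDef) :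
    (star (evalM (fun j => star (Z j)) (S.φr (sigmaWord d hd n))) *
        evalM (fun j => star (Z j)) (S.φr (sigmaWord d hd n))).PosDef ∧
      (evalM (fun j => star (Z j)) (S.φr (sigmaWord d hd n))).det ≠ 0 :=
  reverse_poly_no_zeros_in_ball_general hd S n Z hZ
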